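/- Let r ≥ 1, let U ⊆ ℂ be open, let z ∈ U, let θ : U → M_r(ℂ) be differentiable at z with θ invertible in a neighborhood of z, and let Φ, A : U → M_r(ℂ) be differentiable at z. Define Φ₁ := θ⁻¹Φθ and A₁ := θ⁻¹Aθ + θ⁻¹θ′ near z, where ′ denotes the entrywise derivative. Then at z: Tr(Φ₁·A₁) + (1/2)·Tr(Φ₁·Φ₁) + (1/2)·Tr(Φ₁′) = Tr(Φ·A) + (1/2)·Tr(Φ·Φ) + (1/2)·Tr(Φ′) + Tr(θ⁻¹·Φ·θ′). -/

import Mathlib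

open Matrix

/-- Entrywise derivative of a matrix-valued function of one complex variable. -/
noncomputable def mderiv {r : ℕ} (f : ℂ → Matrix (Fin r) (Fin r) ℂ) (z : ℂ) :
    Matrix (Fin r) (Fin r) ℂ :=
  Matrix.of fun i j => deriv (fun w => f w i j) z

/-- Entrywise differentiability of a matrix-valued function at a point. -/
def MatDifferentiableAt {r : ℕ} (f : ℂ → Matrix (Fin r) (Fin r) ℂ) (z : ℂ) : Prop :=
  ∀ i j, DifferentiableAt ℂ (fun w => f w i j) z

/-!
Since `Φ₁ = θ⁻¹Φθ`, cyclicity of the trace gives `Tr(Φ₁A₁) = Tr(ΦA) + Tr(θ⁻¹Φθ′)` and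
`Tr(Φ₁Φ₁) = Tr(ΦΦ)` pointwise. For the derivative term, the trace commutes with the entrywise
derivative, and `Tr Φ₁ = Tr Φ` on the neighbourhood where `θ` is invertible, so
`Tr Φ₁′ = Tr Φ′`. The only analytic input is that `θ⁻¹` is differentiable at `z`, which follows
from Cramer's rule.
-/

namespace MatDifferentiableAt

variable {r : ℕ} {f g : ℂ → Matrix (Fin r) (Fin r) ℂ} {z : ℂ}

theorem mul (hf : MatDifferentiableAt f z) (hg : MatDifferentiableAt g z) :
    MatDifferentiableAt (fun w => f w * g w) z := fun i j => by
  simp only [mul_apply]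
  exact DifferentiableAt.fun_sum fun k _ => (hf i k).mul (hg k j)

theorem det (hf : MatDifferentiableAt f z) : DifferentiableAt ℂ (fun w => (f w).det) z := by
  simp only [det_apply']
  exact DifferentiableAt.fun_sum fun σ _ =>
    (differentiableAt_const _).mul (DifferentiableAt.fun_finsetProd fun i _ => hf (σ i) i)

theorem adjugate (hf : MatDifferentiableAt f z) :
    MatDifferentiableAt (fun w => (f w).adjugate) z := fun i j => by
  simp only [adjugate_apply]
  refine det fun a b => ?_
  by_cases hja : a = j
  · subst hja
    simpa only [updateRow_self] using differentiableAt_const _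
  · simpa only [updateRow_ne hja] using hf a b

theorem inv (hf : MatDifferentiableAt f z) (hdet : IsUnit (f z).det) :
    MatDifferentiableAt (fun w => (f w)⁻¹) z := fun i j => by
  simp only [inv_def, Ring.inverse_eq_inv', Matrix.smul_apply, smul_eq_mul]
  exact (hf.det.inv hdet.ne_zero).mul (hf.adjugate i j)

end MatDifferentiableAt

theorem trace_mderiv {r : ℕ} {f : ℂ → Matrix (Fin r) (Fin r) ℂ} {z : ℂ}
    (hf : MatDifferentiableAt f z) :
    trace (mderiv f z) = deriv (fun w => trace (f w)) z := by
  simp only [trace, diag, mderiv, of_apply]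
  rw [deriv_fun_sum fun i _ => hf i i]

theorem stmt4_general (r : ℕ) (z : ℂ)
    (θ Φ A : ℂ → Matrix (Fin r) (Fin r) ℂ)
    (hθ : MatDifferentiableAt θ z)
    (hinv : ∀ᶠ w in nhds z, IsUnit (θ w))
    (hΦ : MatDifferentiableAt Φ z)
    (Φ₁ A₁ : ℂ → Matrix (Fin r) (Fin r) ℂ)
    (hΦ₁ : ∀ w, Φ₁ w = (θ w)⁻¹ * Φ w * θ w)
    (hA₁ : ∀ w, A₁ w = (θ w)⁻¹ * A w * θ w + (θ w)⁻¹ * mderiv θ w) :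
    trace (Φ₁ z * A₁ z) + (1 / 2 : ℂ) * trace (Φ₁ z * Φ₁ z)
        + (1 / 2 : ℂ) * trace (mderiv Φ₁ z)
      = trace (Φ z * A z) + (1 / 2 : ℂ) * trace (Φ z * Φ z)
          + (1 / 2 : ℂ) * trace (mderiv Φ z)
          + trace ((θ z)⁻¹ * Φ z * mderiv θ z) := by
  have hu : IsUnit (θ z) := hinv.self_of_nhds
  have hdet : IsUnit (θ z).det := (isUnit_iff_isUnit_det _).mp hu
  have hΦ₁d : MatDifferentiableAt Φ₁ z := by
    rw [funext hΦ₁]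
    exact ((hθ.inv hdet).mul hΦ).mul hθ
  have trace_Φ₁ : (fun w => trace (Φ₁ w)) =ᶠ[nhds z] fun w => trace (Φ w) := by
    filter_upwards [hinv] with w hw
    rw [hΦ₁, trace_conj' hw]
  have Φ₁_mul_A₁ : Φ₁ z * A₁ z = (θ z)⁻¹ * (Φ z * A z) * θ z + (θ z)⁻¹ * Φ z * mderiv θ z := by
    simp only [hΦ₁, hA₁, Matrix.mul_add, Matrix.mul_assoc, mul_nonsing_inv_cancel_left _ _ hdet]
  have Φ₁_mul_Φ₁ : Φ₁ z * Φ₁ z = (θ z)⁻¹ * (Φ z * Φ z) * θ z := by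
    simp only [hΦ₁, Matrix.mul_assoc, mul_nonsing_inv_cancel_left _ _ hdet]
  have trace_mderiv_Φ₁ : trace (mderiv Φ₁ z) = trace (mderiv Φ z) := by
    rw [trace_mderiv hΦ₁d, trace_mderiv hΦ, trace_Φ₁.deriv_eq]
  rw [Φ₁_mul_A₁, Φ₁_mul_Φ₁, trace_add, trace_conj' hu, trace_conj' hu, trace_mderiv_Φ₁]
  ring

/-- with Φ₁ := θ⁻¹Φθ and A₁ := θ⁻¹Aθ + θ⁻¹θ′, at z,
Tr(Φ₁A₁) + ½Tr(Φ₁Φ₁) + ½Tr(Φ₁′) = Tr(ΦA) + ½Tr(ΦΦ) + ½Tr(Φ′) + Tr(θ⁻¹Φθ′). -/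
theorem stmt4 (r : ℕ) (hr : 1 ≤ r) (U : Set ℂ) (hU : IsOpen U) (z : ℂ) (hz : z ∈ U)
    (θ Φ A : ℂ → Matrix (Fin r) (Fin r) ℂ)
    (hθ : MatDifferentiableAt θ z)
    (hinv : ∀ᶠ w in nhds z, IsUnit (θ w))
    (hΦ : MatDifferentiableAt Φ z) (hA : MatDifferentiableAt A z)
    (Φ₁ A₁ : ℂ → Matrix (Fin r) (Fin r) ℂ)
    (hΦ₁ : ∀ w, Φ₁ w = (θ w)⁻¹ * Φ w * θ w)
    (hA₁ : ∀ w, A₁ w = (θ w)⁻¹ * A w * θ w + (θ w)⁻¹ * mderiv θ w) :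
    trace (Φ₁ z * A₁ z) + (1 / 2 : ℂ) * trace (Φ₁ z * Φ₁ z)
        + (1 / 2 : ℂ) * trace (mderiv Φ₁ z)
      = trace (Φ z * A z) + (1 / 2 : ℂ) * trace (Φ z * Φ z)
          + (1 / 2 : ℂ) * trace (mderiv Φ z)
          + trace ((θ z)⁻¹ * Φ z * mderiv θ z) :=
  stmt4_general r z θ Φ A hθ hinv hΦ Φ₁ A₁ hΦ₁ hA₁
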